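/- Let d be a positive integer, let F : ℝ^d → ℝ^d be twice continuously differentiable, and let y : [t₀, T] → ℝ^d be differentiable with y'(t) = F(y(t)) on [t₀, T]. For a positive integer M set k = (T − t₀)/M and t_n = t₀ + n·k; define Y⁰ = y(t₀) and Y^{n+1} = H_{k/3}(H_{k/3}(H_{k/3}(Y^n))) for n = 0, …, M − 1, where H_h(z) = z + (h/2)·(F(z) + F(z + h·F(z))). Then there exists a constant C > 0, independent of M, such that for every positive integer M, max_{0 ≤ n ≤ M} ‖y(t_n) − Y^n‖ ≤ C·k²; that is, the three-step explicit scheme is second-order convergent for general systems of ordinary differential equations with smooth right-hand side. -/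

import Mathlib

section Helpers
variable {E : Type*} [NormedAddCommGroup E] [NormedSpace ℝ E]

lemma my_fderiv_lip (F : E → E) (hF : ContDiff ℝ 2 F) {K : Set E} (hK : Convex ℝ K)
    {M2 : ℝ} (hM2 : ∀ x ∈ K, ‖fderiv ℝ (fderiv ℝ F) x‖ ≤ M2)
    {a b : E} (ha : a ∈ K) (hb : b ∈ K) :
    ‖fderiv ℝ F b - fderiv ℝ F a‖ ≤ M2 * ‖b - a‖ := by
  have h1 : ContDiff ℝ 1 (fderiv ℝ F) := hF.fderiv_right (by norm_num)
  exact hK.norm_image_sub_le_of_norm_fderiv_le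
    (fun x _ => (h1.differentiable one_ne_zero).differentiableAt) hM2 ha hb

lemma my_taylor_quad (F : E → E) (hF : ContDiff ℝ 2 F) {K : Set E} (hK : Convex ℝ K)
    {M2 : ℝ} (hM2 : ∀ x ∈ K, ‖fderiv ℝ (fderiv ℝ F) x‖ ≤ M2)
    {a b : E} (ha : a ∈ K) (hb : b ∈ K) :
    ‖F b - F a - fderiv ℝ F a (b - a)‖ ≤ M2 * ‖b - a‖ ^ 2 := by
  have hM2nn : 0 ≤ M2 := le_trans (norm_nonneg _) (hM2 a ha)
  set s := K ∩ Metric.closedBall a ‖b - a‖ with hs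
  have hsc : Convex ℝ s := hK.inter (convex_closedBall _ _)
  have has : a ∈ s := ⟨ha, by simp⟩
  have hbs : b ∈ s := ⟨hb, by simp [Metric.mem_closedBall, dist_eq_norm]⟩
  have hb2 : ∀ x ∈ s, ‖fderiv ℝ F x - fderiv ℝ F a‖ ≤ M2 * ‖b - a‖ := by
    intro x hx
    refine le_trans (my_fderiv_lip F hF hK hM2 ha hx.1) ?_
    have : ‖x - a‖ ≤ ‖b - a‖ := by
      have := hx.2; simpa [Metric.mem_closedBall, dist_eq_norm] using this
    exact mul_le_mul_of_nonneg_left this hM2nn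
  have := hsc.norm_image_sub_le_of_norm_fderiv_le'
    (fun x _ => (hF.differentiable (by norm_num)).differentiableAt) hb2 has hbs
  calc ‖F b - F a - fderiv ℝ F a (b - a)‖ ≤ M2 * ‖b - a‖ * ‖b - a‖ := this
    _ = M2 * ‖b - a‖ ^ 2 := by ring

end Helpers

/-- The Heun substep map `H_h(z) = z + (h/2)(F(z) + F(z + h F(z)))` in `ℝ^d`. -/
noncomputable def heunStep {d : ℕ} (F : (Fin d → ℝ) → Fin d → ℝ) (h : ℝ)
    (z : Fin d → ℝ) : Fin d → ℝ :=
  z + (h / 2) • (F z + F (z + h • F z))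

set_option maxHeartbeats 2000000 in
/-- global second-order convergence of the three-step explicit
scheme for a general system `y' = F(y)` with `F` twice continuously
differentiable. With `k = (T − t₀)/M`, `Y⁰ = y(t₀)` and
`Y^{n+1} = H_{k/3}(H_{k/3}(H_{k/3}(Y^n)))`, there is a constant `C > 0`,
independent of `M`, with `max_{0 ≤ n ≤ M} ‖y(t_n) − Y^n‖ ≤ C k²`.
Here `ℝ^d` is `Fin d → ℝ` with the sup-norm. -/
theorem three_step_scheme_second_order_convergence (d : ℕ) (hd : 0 < d)
    (F : (Fin d → ℝ) → Fin d → ℝ) (hF : ContDiff ℝ 2 F)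
    (t₀ T : ℝ) (htT : t₀ < T) (y : ℝ → Fin d → ℝ)
    (hy : ∀ t ∈ Set.Icc t₀ T, HasDerivAt y (F (y t)) t) :
    ∃ C > (0 : ℝ), ∀ M : ℕ, 0 < M →
      ∀ Y : ℕ → Fin d → ℝ, Y 0 = y t₀ →
        (∀ n < M, Y (n + 1) =
          heunStep F ((T - t₀) / M / 3)
            (heunStep F ((T - t₀) / M / 3)
              (heunStep F ((T - t₀) / M / 3) (Y n)))) →
        ∀ n ≤ M, ‖y (t₀ + n * ((T - t₀) / M)) - Y n‖ ≤ C * ((T - t₀) / M) ^ 2 := by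
  have hFdiff : Differentiable ℝ F := hF.differentiable (by norm_num)
  have hF1 : ContDiff ℝ 1 (fderiv ℝ F) := hF.fderiv_right (by norm_num)
  have hycont : ContinuousOn y (Set.Icc t₀ T) := fun t ht =>
    ((hy t ht).continuousAt).continuousWithinAt
  set S : Set (Fin d → ℝ) := y '' Set.Icc t₀ T with hSdef
  have hScomp : IsCompact S := isCompact_Icc.image_of_continuousOn hycont
  obtain ⟨R0, hR0⟩ : ∃ R, ∀ x ∈ S, ‖x‖ ≤ R :=
    hScomp.exists_bound_of_continuousOn continuousOn_id
  set R := max R0 0 with hRdef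
  have hRnn : 0 ≤ R := le_max_right _ _
  have hYnorm : ∀ t ∈ Set.Icc t₀ T, ‖y t‖ ≤ R := fun t ht =>
    le_trans (hR0 (y t) ⟨t, ht, rfl⟩) (le_max_left _ _)
  set K : Set (Fin d → ℝ) := Metric.closedBall 0 (R + 4) with hKdef
  have hKconv : Convex ℝ K := convex_closedBall _ _
  have hKcomp : IsCompact K := isCompact_closedBall _ _
  have hKmem : ∀ p : Fin d → ℝ, ‖p‖ ≤ R + 4 → p ∈ K := by
    intro p hp; simpa [hKdef, Metric.mem_closedBall, dist_eq_norm] using hp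
  obtain ⟨B0, hB0⟩ := hKcomp.exists_bound_of_continuousOn hF.continuous.continuousOn
  set B := max B0 1 with hBdef
  have hB1 : (1:ℝ) ≤ B := le_max_right _ _
  have hB : ∀ p : Fin d → ℝ, ‖p‖ ≤ R + 4 → ‖F p‖ ≤ B := fun p hp =>
    le_trans (hB0 p (hKmem p hp)) (le_max_left _ _)
  obtain ⟨M10, hM10⟩ := hKcomp.exists_bound_of_continuousOn
    (hF.continuous_fderiv (by norm_num)).continuousOn
  set M1 := max M10 1 with hM1def
  have hM11 : (1:ℝ) ≤ M1 := le_max_right _ _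
  have hM1 : ∀ p : Fin d → ℝ, ‖p‖ ≤ R + 4 → ‖fderiv ℝ F p‖ ≤ M1 := fun p hp =>
    le_trans (hM10 p (hKmem p hp)) (le_max_left _ _)
  obtain ⟨M20, hM20⟩ := hKcomp.exists_bound_of_continuousOn
    (hF1.continuous_fderiv one_ne_zero).continuousOn
  set M2 := max M20 1 with hM2def
  have hM21 : (1:ℝ) ≤ M2 := le_max_right _ _
  have hM2 : ∀ p ∈ K, ‖fderiv ℝ (fderiv ℝ F) p‖ ≤ M2 := fun p hp =>
    le_trans (hM20 p hp) (le_max_left _ _)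
  -- Lipschitz and Taylor estimates on K
  have hLip : ∀ a b : Fin d → ℝ, ‖a‖ ≤ R + 4 → ‖b‖ ≤ R + 4 →
      ‖F a - F b‖ ≤ M1 * ‖a - b‖ := by
    intro a b ha hb
    exact hKconv.norm_image_sub_le_of_norm_fderiv_le
      (fun x _ => hFdiff.differentiableAt) (fun x hx => hM1 x (by
        simpa [hKdef, Metric.mem_closedBall, dist_eq_norm] using hx))
      (hKmem b hb) (hKmem a ha)
  have hLip2 : ∀ a b : Fin d → ℝ, ‖a‖ ≤ R + 4 → ‖b‖ ≤ R + 4 →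
      ‖fderiv ℝ F a - fderiv ℝ F b‖ ≤ M2 * ‖a - b‖ :=
    fun a b ha hb => my_fderiv_lip F hF hKconv hM2 (hKmem b hb) (hKmem a ha)
  have hTay : ∀ a b : Fin d → ℝ, ‖a‖ ≤ R + 4 → ‖b‖ ≤ R + 4 →
      ‖F b - F a - fderiv ℝ F a (b - a)‖ ≤ M2 * ‖b - a‖ ^ 2 :=
    fun a b ha hb => my_taylor_quad F hF hKconv hM2 (hKmem a ha) (hKmem b hb)
  have hMVT1 : ∀ a b : ℝ, a ∈ Set.Icc t₀ T → b ∈ Set.Icc t₀ T →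
      ‖y b - y a‖ ≤ B * ‖b - a‖ := by
    intro a b ha hb
    refine Convex.norm_image_sub_le_of_norm_hasDerivWithin_le
      (f' := fun t => F (y t)) (fun t ht => (hy t ht).hasDerivWithinAt)
      (fun t ht => hB (y t) (by linarith [hYnorm t ht])) (convex_Icc _ _) ha hb
  have hMVT2 : ∀ t s : ℝ, t ∈ Set.Icc t₀ T → t + s ∈ Set.Icc t₀ T → 0 ≤ s →
      ‖y (t + s) - y t - s • F (y t)‖ ≤ M1 * B * s ^ 2 := by
    intro t s ht hts hs
    have hsub : Set.Icc t (t + s) ⊆ Set.Icc t₀ T := Set.Icc_subset_Icc ht.1 hts.2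
    have hgd : ∀ τ ∈ Set.Icc t (t + s),
        HasDerivWithinAt (fun τ => y τ - (τ - t) • F (y t)) (F (y τ) - F (y t))
          (Set.Icc t (t + s)) τ := by
      intro τ hτ
      have h1 : HasDerivAt y (F (y τ)) τ := hy τ (hsub hτ)
      have h2 : HasDerivAt (fun τ : ℝ => (τ - t) • F (y t)) (F (y t)) τ := by
        simpa using ((hasDerivAt_id τ).sub_const t).smul_const (F (y t))
      exact (h1.sub h2).hasDerivWithinAt
    have hbound : ∀ τ ∈ Set.Icc t (t + s), ‖F (y τ) - F (y t)‖ ≤ M1 * (B * s) := by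
      intro τ hτ
      have h1 := hLip (y τ) (y t) (by linarith [hYnorm τ (hsub hτ)]) (by linarith [hYnorm t ht])
      have h2 := hMVT1 t τ ht (hsub hτ)
      have h3 : ‖τ - t‖ ≤ s := by
        rw [Real.norm_eq_abs, abs_of_nonneg (by linarith [hτ.1])]
        linarith [hτ.2]
      have hBnn : (0:ℝ) ≤ B := by linarith
      have hM1nn : (0:ℝ) ≤ M1 := by linarith
      calc ‖F (y τ) - F (y t)‖ ≤ M1 * ‖y τ - y t‖ := h1
        _ ≤ M1 * (B * ‖τ - t‖) := by
            exact mul_le_mul_of_nonneg_left h2 (by linarith)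
        _ ≤ M1 * (B * s) := by
            have : B * ‖τ - t‖ ≤ B * s := mul_le_mul_of_nonneg_left h3 (by linarith)
            exact mul_le_mul_of_nonneg_left this (by linarith)
    have hmem1 : t ∈ Set.Icc t (t + s) := ⟨le_refl _, by linarith⟩
    have hmem2 : t + s ∈ Set.Icc t (t + s) := ⟨by linarith, le_refl _⟩
    have := Convex.norm_image_sub_le_of_norm_hasDerivWithin_le hgd hbound
      (convex_Icc _ _) hmem1 hmem2
    have he : (fun τ => y τ - (τ - t) • F (y t)) (t + s)
        - (fun τ => y τ - (τ - t) • F (y t)) t = y (t + s) - y t - s • F (y t) := by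
      simp only []
      rw [show t + s - t = s by ring, show t - t = (0:ℝ) by ring, zero_smul, sub_zero]
      abel
    rw [he] at this
    have hns : ‖t + s - t‖ = s := by
      rw [show t + s - t = s by ring, Real.norm_eq_abs, abs_of_nonneg hs]
    rw [hns] at this
    calc ‖y (t + s) - y t - s • F (y t)‖ ≤ M1 * (B * s) * s := this
      _ = M1 * B * s ^ 2 := by ring
  -- displacement of one Heun substep
  have hHdisp : ∀ (h : ℝ) (z : Fin d → ℝ), 0 ≤ h → B * h ≤ 1 → ‖z‖ ≤ R + 3 →
      ‖heunStep F h z - z‖ ≤ B * h := by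
    intro h z hh hBh hz
    have hz4 : ‖z‖ ≤ R + 4 := by linarith
    have hFz : ‖F z‖ ≤ B := hB z hz4
    have hzn : ‖z + h • F z‖ ≤ R + 4 := by
      calc ‖z + h • F z‖ ≤ ‖z‖ + ‖h • F z‖ := norm_add_le _ _
        _ = ‖z‖ + h * ‖F z‖ := by rw [norm_smul, Real.norm_eq_abs, abs_of_nonneg hh]
        _ ≤ (R + 3) + 1 := by
            have : h * ‖F z‖ ≤ B * h := by nlinarith [norm_nonneg (F z)]
            linarith
        _ = R + 4 := by ring
    have he : heunStep F h z - z = (h / 2) • (F z + F (z + h • F z)) := by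
      simp [heunStep]
    rw [he, norm_smul, Real.norm_eq_abs, abs_of_nonneg (by linarith : (0:ℝ) ≤ h / 2)]
    have h2 : ‖F z + F (z + h • F z)‖ ≤ 2 * B := by
      calc ‖F z + F (z + h • F z)‖ ≤ ‖F z‖ + ‖F (z + h • F z)‖ := norm_add_le _ _
        _ ≤ 2 * B := by linarith [hB _ hzn]
    nlinarith [norm_nonneg (F z + F (z + h • F z))]
  -- Lipschitz property of one Heun substep
  have hHLip : ∀ (h : ℝ) (z w : Fin d → ℝ), 0 ≤ h → B * h ≤ 1 → M1 * h ≤ 1 →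
      ‖z‖ ≤ R + 3 → ‖w‖ ≤ R + 3 →
      ‖heunStep F h z - heunStep F h w‖ ≤ (1 + 2 * M1 * h) * ‖z - w‖ := by
    intro h z w hh hBh hM1h hz hw
    have hz4 : ‖z‖ ≤ R + 4 := by linarith
    have hw4 : ‖w‖ ≤ R + 4 := by linarith
    have hzn : ‖z + h • F z‖ ≤ R + 4 := by
      calc ‖z + h • F z‖ ≤ ‖z‖ + ‖h • F z‖ := norm_add_le _ _
        _ = ‖z‖ + h * ‖F z‖ := by rw [norm_smul, Real.norm_eq_abs, abs_of_nonneg hh]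
        _ ≤ R + 4 := by nlinarith [norm_nonneg (F z), hB z hz4]
    have hwn : ‖w + h • F w‖ ≤ R + 4 := by
      calc ‖w + h • F w‖ ≤ ‖w‖ + ‖h • F w‖ := norm_add_le _ _
        _ = ‖w‖ + h * ‖F w‖ := by rw [norm_smul, Real.norm_eq_abs, abs_of_nonneg hh]
        _ ≤ R + 4 := by nlinarith [norm_nonneg (F w), hB w hw4]
    have hdiff : heunStep F h z - heunStep F h w
        = (z - w) + (h / 2) • ((F z - F w) + (F (z + h • F z) - F (w + h • F w))) := by
      simp only [heunStep]
      module
    have h1 : ‖F z - F w‖ ≤ M1 * ‖z - w‖ := hLip z w hz4 hw4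
    have h2 : ‖F (z + h • F z) - F (w + h • F w)‖ ≤ M1 * (2 * ‖z - w‖) := by
      have := hLip (z + h • F z) (w + h • F w) hzn hwn
      have he2 : z + h • F z - (w + h • F w) = (z - w) + h • (F z - F w) := by module
      rw [he2] at this
      refine le_trans this ?_
      have h3 : ‖(z - w) + h • (F z - F w)‖ ≤ 2 * ‖z - w‖ := by
        calc ‖(z - w) + h • (F z - F w)‖ ≤ ‖z - w‖ + ‖h • (F z - F w)‖ := norm_add_le _ _
          _ = ‖z - w‖ + h * ‖F z - F w‖ := by
              rw [norm_smul, Real.norm_eq_abs, abs_of_nonneg hh]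
          _ ≤ 2 * ‖z - w‖ := by nlinarith [norm_nonneg (z - w), norm_nonneg (F z - F w)]
      exact mul_le_mul_of_nonneg_left h3 (by linarith)
    rw [hdiff]
    calc ‖(z - w) + (h / 2) • ((F z - F w) + (F (z + h • F z) - F (w + h • F w)))‖
        ≤ ‖z - w‖ + (h / 2) * ‖(F z - F w) + (F (z + h • F z) - F (w + h • F w))‖ := by
          refine le_trans (norm_add_le _ _) ?_
          rw [norm_smul, Real.norm_eq_abs, abs_of_nonneg (by linarith : (0:ℝ) ≤ h / 2)]
      _ ≤ ‖z - w‖ + (h / 2) * (M1 * ‖z - w‖ + M1 * (2 * ‖z - w‖)) := by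
          have := norm_add_le (F z - F w) (F (z + h • F z) - F (w + h • F w))
          nlinarith [norm_nonneg ((F z - F w) + (F (z + h • F z) - F (w + h • F w)))]
      _ ≤ (1 + 2 * M1 * h) * ‖z - w‖ := by
          nlinarith [norm_nonneg (z - w),
            mul_nonneg (mul_nonneg (by linarith : (0:ℝ) ≤ M1) hh) (norm_nonneg (z - w))]
  obtain ⟨Ac, hAcdef⟩ : ∃ a : ℝ, a = M1 ^ 2 * B + 2 * M2 * B ^ 2 := ⟨_, rfl⟩
  have hAc1 : (1:ℝ) ≤ Ac := by rw [hAcdef]; nlinarith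
  have hTrunc : ∀ t h : ℝ, t ∈ Set.Icc t₀ T → t + h ∈ Set.Icc t₀ T → 0 ≤ h → B * h ≤ 1 →
      ‖y (t + h) - heunStep F h (y t)‖ ≤ Ac * h ^ 3 := by
    intro t h ht hth hh hBh
    set z := y t with hzdef
    have hznorm : ‖z‖ ≤ R := hYnorm t ht
    have hFz : ‖F z‖ ≤ B := hB z (by linarith)
    set φd : ℝ → (Fin d → ℝ) := fun s =>
      F (y (t + s)) - ((1/2 : ℝ) • (F z + F (z + s • F z))
        + (s/2) • (fderiv ℝ F (z + s • F z) (F z))) with hφddef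
    have hIccsub : ∀ s ∈ Set.Icc (0:ℝ) h, t + s ∈ Set.Icc t₀ T := by
      intro s hs
      exact ⟨by linarith [ht.1, hs.1], by linarith [hth.2, hs.2]⟩
    have hderiv : ∀ s ∈ Set.Icc (0:ℝ) h,
        HasDerivWithinAt (fun s => y (t + s) - heunStep F s z) (φd s) (Set.Icc 0 h) s := by
      intro s hs
      have h1 : HasDerivAt (fun s : ℝ => y (t + s)) (F (y (t + s))) s := by
        have hd := hy (t + s) (hIccsub s hs)
        have h2 : HasDerivAt (fun s : ℝ => t + s) 1 s := (hasDerivAt_id s).const_add t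
        simpa [Function.comp_def] using hd.scomp s h2
      have hu : HasDerivAt (fun s : ℝ => z + s • F z) (F z) s := by
        simpa using ((hasDerivAt_id s).smul_const (F z)).const_add z
      have hG : HasDerivAt (fun s : ℝ => F (z + s • F z))
          (fderiv ℝ F (z + s • F z) (F z)) s :=
        (hFdiff (z + s • F z)).hasFDerivAt.comp_hasDerivAt s hu
      have hc : HasDerivAt (fun s : ℝ => s / 2) (1/2) s := (hasDerivAt_id s).div_const 2
      have hψ : HasDerivAt (fun s : ℝ => heunStep F s z)
          ((1/2 : ℝ) • (F z + F (z + s • F z))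
            + (s/2) • (fderiv ℝ F (z + s • F z) (F z))) s := by
        have hadd : HasDerivAt (fun s : ℝ => F z + F (z + s • F z))
            (fderiv ℝ F (z + s • F z) (F z)) s := hG.const_add (F z)
        have hψ' := (hc.smul hadd).const_add z
        have hfun : (fun s : ℝ => z + (s/2) • (F z + F (z + s • F z)))
            = fun s : ℝ => heunStep F s z := by
          funext s; simp [heunStep]
        simp only [Pi.smul_apply'] at hψ'
        rw [hfun] at hψ'
        rw [add_comm ((1/2 : ℝ) • (F z + F (z + s • F z)))]
        exact hψ'
      exact (h1.sub hψ).hasDerivWithinAt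
    have hbound : ∀ s ∈ Set.Icc (0:ℝ) h, ‖φd s‖ ≤ Ac * h ^ 2 := by
      intro s hs
      obtain ⟨hs0, hsh⟩ := hs
      have hts : t + s ∈ Set.Icc t₀ T := hIccsub s ⟨hs0, hsh⟩
      have hyts : ‖y (t + s)‖ ≤ R := hYnorm _ hts
      have hsB : s * ‖F z‖ ≤ 1 := by nlinarith [norm_nonneg (F z)]
      have hun : ‖z + s • F z‖ ≤ R + 4 := by
        calc ‖z + s • F z‖ ≤ ‖z‖ + ‖s • F z‖ := norm_add_le _ _
          _ = ‖z‖ + s * ‖F z‖ := by rw [norm_smul, Real.norm_eq_abs, abs_of_nonneg hs0]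
          _ ≤ R + 4 := by linarith
      set Δ := y (t + s) - z with hΔdef
      have hΔ : ‖Δ‖ ≤ B * s := by
        have := hMVT1 t (t + s) ht hts
        rw [show t + s - t = s by ring, Real.norm_eq_abs, abs_of_nonneg hs0] at this
        exact this
      have hβ : ‖Δ - s • F z‖ ≤ M1 * B * s ^ 2 := by
        have := hMVT2 t s ht hts hs0
        have he : y (t + s) - z - s • F z = Δ - s • F z := by rw [hΔdef]
        rw [← he]
        exact this
      set R1 := F (y (t + s)) - F z - fderiv ℝ F z Δ with hR1def
      set R2 := F (z + s • F z) - F z - fderiv ℝ F z (s • F z) with hR2def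
      set R3 := fderiv ℝ F (z + s • F z) (F z) - fderiv ℝ F z (F z) with hR3def
      have hR1 : ‖R1‖ ≤ M2 * (B * s) ^ 2 := by
        have := hTay z (y (t + s)) (by linarith) (by linarith)
        rw [hR1def, hΔdef]
        refine le_trans this ?_
        have : ‖y (t + s) - z‖ ^ 2 ≤ (B * s) ^ 2 := by
          have h0 := norm_nonneg (y (t + s) - z)
          nlinarith [hΔ]
        nlinarith
      have hR2 : ‖R2‖ ≤ M2 * (B * s) ^ 2 := by
        have := hTay z (z + s • F z) (by linarith) hun
        rw [show z + s • F z - z = s • F z by abel] at this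
        rw [hR2def]
        refine le_trans this ?_
        have hn : ‖s • F z‖ = s * ‖F z‖ := by
          rw [norm_smul, Real.norm_eq_abs, abs_of_nonneg hs0]
        rw [hn]
        have h4 : ‖F z‖ ^ 2 ≤ B ^ 2 := by nlinarith [norm_nonneg (F z)]
        have h5 : (s * ‖F z‖) ^ 2 ≤ (B * s) ^ 2 := by
          calc (s * ‖F z‖) ^ 2 = s ^ 2 * ‖F z‖ ^ 2 := by ring
            _ ≤ s ^ 2 * B ^ 2 := mul_le_mul_of_nonneg_left h4 (sq_nonneg s)
            _ = (B * s) ^ 2 := by ring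
        nlinarith
      have hR3 : ‖R3‖ ≤ M2 * (B * s) * B := by
        have hlip := hLip2 (z + s • F z) z hun (by linarith)
        rw [show z + s • F z - z = s • F z by abel] at hlip
        have hn : ‖s • F z‖ = s * ‖F z‖ := by
          rw [norm_smul, Real.norm_eq_abs, abs_of_nonneg hs0]
        rw [hn] at hlip
        have happ : ‖R3‖ ≤ ‖fderiv ℝ F (z + s • F z) - fderiv ℝ F z‖ * ‖F z‖ := by
          rw [hR3def]
          have : fderiv ℝ F (z + s • F z) (F z) - fderiv ℝ F z (F z)
              = (fderiv ℝ F (z + s • F z) - fderiv ℝ F z) (F z) := by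
            simp [ContinuousLinearMap.sub_apply]
          rw [this]
          exact (fderiv ℝ F (z + s • F z) - fderiv ℝ F z).le_opNorm (F z)
        refine le_trans happ ?_
        have hM2nn : (0:ℝ) ≤ M2 := by linarith
        calc ‖fderiv ℝ F (z + s • F z) - fderiv ℝ F z‖ * ‖F z‖
            ≤ (M2 * (s * ‖F z‖)) * ‖F z‖ :=
              mul_le_mul_of_nonneg_right hlip (norm_nonneg _)
          _ = (M2 * s) * (‖F z‖ * ‖F z‖) := by ring
          _ ≤ (M2 * s) * (B * B) :=
              mul_le_mul_of_nonneg_left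
                (mul_le_mul hFz hFz (norm_nonneg _) (by linarith))
                (mul_nonneg hM2nn hs0)
          _ = M2 * (B * s) * B := by ring
      have hid : φd s = fderiv ℝ F z (Δ - s • F z) + R1
          - (1/2 : ℝ) • R2 - (s/2) • R3 := by
        rw [hφddef, hR1def, hR2def, hR3def, hΔdef]
        simp only [map_sub, map_smul]
        module
      have hfzv : ‖fderiv ℝ F z (Δ - s • F z)‖ ≤ M1 * (M1 * B * s ^ 2) := by
        have h1 : ‖fderiv ℝ F z (Δ - s • F z)‖ ≤ ‖fderiv ℝ F z‖ * ‖Δ - s • F z‖ :=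
          (fderiv ℝ F z).le_opNorm _
        have h2 := hM1 z (by linarith)
        have hM1nn : (0:ℝ) ≤ M1 := by linarith
        nlinarith [norm_nonneg (Δ - s • F z), norm_nonneg (fderiv ℝ F z)]
      rw [hid]
      have htri : ‖fderiv ℝ F z (Δ - s • F z) + R1 - (1/2 : ℝ) • R2 - (s/2) • R3‖
          ≤ ‖fderiv ℝ F z (Δ - s • F z)‖ + ‖R1‖ + (1/2) * ‖R2‖ + (s/2) * ‖R3‖ := by
        have e1 : ‖(1/2 : ℝ) • R2‖ = (1/2) * ‖R2‖ := by
          rw [norm_smul]; norm_num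
        have e2 : ‖(s/2 : ℝ) • R3‖ = (s/2) * ‖R3‖ := by
          rw [norm_smul, Real.norm_eq_abs, abs_of_nonneg (by linarith : (0:ℝ) ≤ s/2)]
        calc ‖fderiv ℝ F z (Δ - s • F z) + R1 - (1/2 : ℝ) • R2 - (s/2) • R3‖
            ≤ ‖fderiv ℝ F z (Δ - s • F z) + R1 - (1/2 : ℝ) • R2‖ + ‖(s/2 : ℝ) • R3‖ :=
              norm_sub_le _ _
          _ ≤ ‖fderiv ℝ F z (Δ - s • F z) + R1‖ + ‖(1/2 : ℝ) • R2‖ + ‖(s/2 : ℝ) • R3‖ := by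
              linarith [norm_sub_le (fderiv ℝ F z (Δ - s • F z) + R1) ((1/2 : ℝ) • R2)]
          _ ≤ ‖fderiv ℝ F z (Δ - s • F z)‖ + ‖R1‖ + ‖(1/2 : ℝ) • R2‖ + ‖(s/2 : ℝ) • R3‖ := by
              linarith [norm_add_le (fderiv ℝ F z (Δ - s • F z)) R1]
          _ = ‖fderiv ℝ F z (Δ - s • F z)‖ + ‖R1‖ + (1/2) * ‖R2‖ + (s/2) * ‖R3‖ := by
              rw [e1, e2]
      refine le_trans htri ?_
      have hss : s ^ 2 ≤ h ^ 2 := by nlinarith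
      have hM2nn : (0:ℝ) ≤ M2 := by linarith
      have hM1nn : (0:ℝ) ≤ M1 := by linarith
      have hBnn : (0:ℝ) ≤ B := by linarith
      have hsum : M1 * (M1 * B * s ^ 2) + M2 * (B * s) ^ 2 + 1/2 * (M2 * (B * s) ^ 2)
          + s/2 * (M2 * (B * s) * B) = Ac * s ^ 2 := by rw [hAcdef]; ring
      have hAcnn : (0:ℝ) ≤ Ac := by linarith
      have hfin : Ac * s ^ 2 ≤ Ac * h ^ 2 := mul_le_mul_of_nonneg_left hss hAcnn
      have hterm3 : s/2 * ‖R3‖ ≤ s/2 * (M2 * (B * s) * B) :=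
        mul_le_mul_of_nonneg_left hR3 (by linarith)
      have hterm2 : 1/2 * ‖R2‖ ≤ 1/2 * (M2 * (B * s) ^ 2) := by linarith
      linarith [hfzv, hR1]
    have h0mem : (0:ℝ) ∈ Set.Icc (0:ℝ) h := ⟨le_refl _, hh⟩
    have hhmem : h ∈ Set.Icc (0:ℝ) h := ⟨hh, le_refl _⟩
    have hmvt := Convex.norm_image_sub_le_of_norm_hasDerivWithin_le hderiv hbound
      (convex_Icc _ _) h0mem hhmem
    have he0 : y (t + 0) - heunStep F 0 z = 0 := by
      simp [heunStep, hzdef]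
    rw [he0, sub_zero] at hmvt
    have hnh : ‖h - 0‖ = h := by
      rw [sub_zero, Real.norm_eq_abs, abs_of_nonneg hh]
    rw [hnh] at hmvt
    calc ‖y (t + h) - heunStep F h z‖ ≤ Ac * h ^ 2 * h := hmvt
      _ = Ac * h ^ 3 := by ring
  -- canonical iterates of the three-step map
  obtain ⟨iter, hiter0, hiterS⟩ :
      ∃ it : ℕ → ℕ → (Fin d → ℝ), (∀ M, it M 0 = y t₀) ∧
        (∀ M n, it M (n+1) = heunStep F ((T - t₀)/M/3) (heunStep F ((T - t₀)/M/3)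
          (heunStep F ((T - t₀)/M/3) (it M n)))) := by
    refine ⟨fun M n => (fun w => heunStep F ((T - t₀)/M/3) (heunStep F ((T - t₀)/M/3)
      (heunStep F ((T - t₀)/M/3) w)))^[n] (y t₀), fun M => rfl, fun M n => ?_⟩
    exact Function.iterate_succ_apply' _ _ _
  have hBpos : (0:ℝ) < B := by linarith
  have hM1pos : (0:ℝ) < M1 := by linarith
  have hAcpos : (0:ℝ) < Ac := by linarith
  have hT : (0:ℝ) < T - t₀ := by linarith
  obtain ⟨Q, hQdef⟩ : ∃ q : ℝ, q = Real.exp (2 * M1 * (T - t₀)) := ⟨_, rfl⟩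
  have hQ1 : 1 ≤ Q := by
    rw [hQdef]
    exact Real.one_le_exp (mul_nonneg (by linarith only [hM11]) hT.le)
  obtain ⟨Ca, hCadef⟩ : ∃ a : ℝ, a = max 1 (Ac * (T - t₀) * Q) := ⟨_, rfl⟩
  have hCa1 : (1:ℝ) ≤ Ca := hCadef ▸ le_max_left _ _
  have hCaQ : Ac * (T - t₀) * Q ≤ Ca := hCadef ▸ le_max_right _ _
  have hCapos : (0:ℝ) < Ca := by linarith
  obtain ⟨k₀, hk0def⟩ : ∃ a : ℝ, a = min (min 1 (1/B)) (min (1/M1) (1/Ca)) := ⟨_, rfl⟩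
  have hk0pos : 0 < k₀ := by rw [hk0def]; positivity
  have hk01 : k₀ ≤ 1 := by
    rw [hk0def]; exact le_trans (min_le_left _ _) (min_le_left _ _)
  have hk0B : k₀ ≤ 1/B := by
    rw [hk0def]; exact le_trans (min_le_left _ _) (min_le_right _ _)
  have hk0M1 : k₀ ≤ 1/M1 := by
    rw [hk0def]; exact le_trans (min_le_right _ _) (min_le_left _ _)
  have hk0Ca : k₀ ≤ 1/Ca := by
    rw [hk0def]; exact le_trans (min_le_right _ _) (min_le_right _ _)
  set M₀ : ℕ := Nat.ceil ((T - t₀)/k₀) + 1 with hM0def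
  set C₀ : ℕ := (Finset.range M₀).sup (fun M => ⌈((Finset.range (M+1)).sup'
      Finset.nonempty_range_add_one (fun i => ‖y (t₀ + i * ((T - t₀) / M)) - iter M i‖))
      * M^2 / (T - t₀)^2⌉₊) with hC0def
  refine ⟨Ca + C₀ + 1, by have h0 : (0:ℝ) ≤ (C₀:ℝ) := Nat.cast_nonneg _; linarith, ?_⟩
  intro M hM Y hY0 hYrec n hn
  have hMR : (0:ℝ) < M := by exact_mod_cast hM
  set k : ℝ := (T - t₀) / M with hkdef
  have hkpos : 0 < k := by rw [hkdef]; positivity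
  have hYiter : ∀ m, m ≤ M → Y m = iter M m := by
    intro m hm
    induction m with
    | zero => rw [hY0, hiter0]
    | succ p ih =>
      rw [hYrec p (by omega), ih (by omega), hiterS]
  by_cases hcase : M₀ ≤ M
  · -- asymptotic regime : k ≤ k₀
    have hMM0 : ((T - t₀)/k₀ : ℝ) ≤ M := by
      have h1 : ((T - t₀)/k₀ : ℝ) ≤ (Nat.ceil ((T - t₀)/k₀) : ℝ) := Nat.le_ceil _
      have h2 : (M₀ : ℝ) ≤ M := by exact_mod_cast hcase
      rw [hM0def] at h2
      push_cast at h2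
      linarith
    have hkk0 : k ≤ k₀ := by
      rw [hkdef, div_le_iff₀ hMR]
      have h3 := (div_le_iff₀ hk0pos).mp hMM0
      linarith only [h3]
    have hk1 : k ≤ 1 := le_trans hkk0 hk01
    have hBk : B * k ≤ 1 := by
      have h4 : k ≤ 1/B := le_trans hkk0 hk0B
      rw [le_div_iff₀ hBpos] at h4
      linarith only [h4]
    have hM1k : M1 * k ≤ 1 := by
      have h4 : k ≤ 1/M1 := le_trans hkk0 hk0M1
      rw [le_div_iff₀ hM1pos] at h4
      linarith only [h4]
    have hCak2 : Ca * k^2 ≤ 1 := by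
      have h4 : k ≤ 1/Ca := le_trans hkk0 hk0Ca
      rw [le_div_iff₀ hCapos] at h4
      have h5 : Ca * k^2 = (k * Ca) * k := by ring
      rw [h5]
      calc (k * Ca) * k ≤ 1 * k := mul_le_mul_of_nonneg_right h4 hkpos.le
        _ = k := one_mul k
        _ ≤ 1 := hk1
    obtain ⟨h, hhdef⟩ : ∃ a : ℝ, a = k / 3 := ⟨_, rfl⟩
    have hh0 : 0 ≤ h := by rw [hhdef]; linarith
    have hhk : 3 * h = k := by rw [hhdef]; ring
    have hBh : B * h ≤ 1 := by rw [hhdef]; linarith only [hBk]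
    have hM1h : M1 * h ≤ 1 := by rw [hhdef]; linarith only [hM1k]
    rw [← hhdef] at hYrec
    obtain ⟨q, hqdef⟩ : ∃ a : ℝ, a = 1 + 2 * M1 * h := ⟨_, rfl⟩
    have hq1 : 1 ≤ q := by
      rw [hqdef]
      linarith only [mul_nonneg hM1pos.le hh0]
    have hq2 : q ≤ 2 := by
      rw [hqdef]
      have h6 : M1 * (3 * h) ≤ 1 := by rw [hhk]; exact hM1k
      linarith only [h6, mul_nonneg hM1pos.le hh0]
    obtain ⟨Tk, hTkdef⟩ : ∃ a : ℝ, a = 3 * Ac * q^2 * h^3 := ⟨_, rfl⟩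
    have hTknn : 0 ≤ Tk := by rw [hTkdef]; positivity
    have hkM : (M:ℝ) * k = T - t₀ := by
      rw [hkdef]; field_simp
    have htmem : ∀ m : ℕ, m ≤ M → t₀ + m * k ∈ Set.Icc t₀ T := by
      intro m hm
      have hmc : (m:ℝ) ≤ M := by exact_mod_cast hm
      have hmc0 : (0:ℝ) ≤ m := Nat.cast_nonneg _
      have h7 : (m:ℝ) * k ≤ (M:ℝ) * k := mul_le_mul_of_nonneg_right hmc hkpos.le
      constructor
      · linarith only [mul_nonneg hmc0 hkpos.le]
      · linarith only [h7, hkM]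
    have hq3M : q ^ (3 * M) ≤ Q := by
      have h1 : q ≤ Real.exp (2 * M1 * h) := by
        rw [hqdef]; linarith [Real.add_one_le_exp (2 * M1 * h)]
      have h2 : q ^ (3 * M) ≤ Real.exp (2 * M1 * h) ^ (3 * M) :=
        pow_le_pow_left₀ (by linarith) h1 _
      rw [← Real.exp_nat_mul] at h2
      rw [hQdef]
      refine le_trans h2 (Real.exp_le_exp.mpr (le_of_eq ?_))
      have h5 : ((3 * M : ℕ) : ℝ) * (2 * M1 * h) = 2 * M1 * ((M:ℝ) * (3 * h)) := by
        push_cast; ring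
      rw [h5, hhk, hkM]
    have hqnn : (0:ℝ) ≤ q := by linarith
    have hchain : ∀ m : ℕ, m ≤ M → Tk * m * q ^ (3 * m) ≤ Ca * k^2 := by
      intro m hm
      have hmM : (m:ℝ) ≤ M := by exact_mod_cast hm
      have hQq : q ^ (3*m) ≤ Q :=
        le_trans (pow_le_pow_right₀ hq1 (by omega)) hq3M
      have hp : (0:ℝ) ≤ q ^ (3*m) := pow_nonneg hqnn _
      have hQpos : (0:ℝ) < Q := by linarith only [hQ1]
      have s1 : Tk * m * q ^ (3*m) ≤ Tk * M * q ^ (3*m) :=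
        mul_le_mul_of_nonneg_right (mul_le_mul_of_nonneg_left hmM hTknn) hp
      have s2 : Tk * M * q ^ (3*m) ≤ Tk * M * Q :=
        mul_le_mul_of_nonneg_left hQq (mul_nonneg hTknn (le_of_lt hMR))
      have hh3 : (0:ℝ) ≤ Ac * h^3 := mul_nonneg hAcpos.le (pow_nonneg hh0 3)
      have h3 : Tk ≤ 12 * Ac * h^3 := by
        rw [hTkdef]
        have h7 : (0:ℝ) ≤ (2-q)*(2+q)*(Ac*h^3) :=
          mul_nonneg (mul_nonneg (by linarith only [hq2]) (by linarith only [hq1])) hh3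
        linarith only [h7]
      have s3 : Tk * M * Q ≤ (12 * Ac * h^3) * M * Q :=
        mul_le_mul_of_nonneg_right (mul_le_mul_of_nonneg_right h3 (le_of_lt hMR)) hQpos.le
      have hMh : (M:ℝ) * h^3 = (T - t₀) * k^2 / 27 := by
        rw [hhdef, ← hkM]; ring
      have s4 : (12 * Ac * h^3) * M * Q = (12/27) * (Ac * (T - t₀) * Q) * k^2 := by
        calc (12 * Ac * h^3) * M * Q = 12 * Ac * ((M:ℝ) * h^3) * Q := by ring
          _ = (12/27) * (Ac * (T - t₀) * Q) * k^2 := by rw [hMh]; ring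
      have hX : (0:ℝ) ≤ Ac * (T - t₀) * Q :=
        mul_nonneg (mul_nonneg hAcpos.le hT.le) hQpos.le
      have s5 : (12/27) * (Ac * (T - t₀) * Q) * k^2 ≤ Ca * k^2 := by
        have h6 : (12/27) * (Ac * (T - t₀) * Q) ≤ Ca := by linarith only [hX, hCaQ]
        exact mul_le_mul_of_nonneg_right h6 (sq_nonneg k)
      linarith only [s1, s2, s3, s5, le_of_eq s4]
    have tri4 : ∀ a b c e f : Fin d → ℝ,
        ‖a - f‖ ≤ ‖a - b‖ + ‖b - c‖ + ‖c - e‖ + ‖e - f‖ := by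
      intro a b c e f
      have h1 : a - f = (a - b) + (b - c) + (c - e) + (e - f) := by abel
      rw [h1]
      calc ‖(a-b) + (b-c) + (c-e) + (e-f)‖
          ≤ ‖(a-b) + (b-c) + (c-e)‖ + ‖e-f‖ := norm_add_le _ _
        _ ≤ ‖(a-b) + (b-c)‖ + ‖c-e‖ + ‖e-f‖ := by
            linarith [norm_add_le ((a-b) + (b-c)) (c-e)]
        _ ≤ ‖a-b‖ + ‖b-c‖ + ‖c-e‖ + ‖e-f‖ := by
            linarith [norm_add_le (a-b) (b-c)]
    have hd1 : ∀ z : Fin d → ℝ, ‖z‖ ≤ R + 2 → ‖heunStep F h z‖ ≤ ‖z‖ + 1 := by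
      intro z hz
      have hdisp := hHdisp h z hh0 hBh (by linarith)
      have h3 : z + (heunStep F h z - z) = heunStep F h z := by abel
      calc ‖heunStep F h z‖ = ‖z + (heunStep F h z - z)‖ := by rw [h3]
        _ ≤ ‖z‖ + ‖heunStep F h z - z‖ := norm_add_le _ _
        _ ≤ ‖z‖ + 1 := by linarith
    have hmain : ∀ m : ℕ, m ≤ M → ‖y (t₀ + m * k) - Y m‖ ≤ Tk * m * q ^ (3 * m) := by
      intro m
      induction m with
      | zero => intro _; simp [hY0]
      | succ p ih =>
        intro hp1
        have hp : p ≤ M := by omega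
        have hem := ih hp
        have he1 : ‖y (t₀ + p * k) - Y p‖ ≤ 1 :=
          le_trans hem (le_trans (hchain p hp) hCak2)
        set tn : ℝ := t₀ + p * k with htndef
        have htn : tn ∈ Set.Icc t₀ T := htmem p hp
        have htn3 : tn + 2*h + h ∈ Set.Icc t₀ T := by
          have h6 := htmem (p+1) hp1
          have harg : t₀ + ((p+1:ℕ):ℝ) * k = tn + 2*h + h := by
            rw [htndef, hhdef]; push_cast; ring
          rwa [harg] at h6
        have htn1 : tn + h ∈ Set.Icc t₀ T :=
          ⟨by linarith [htn.1], by linarith [htn3.2]⟩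
        have htn2 : tn + 2*h ∈ Set.Icc t₀ T :=
          ⟨by linarith [htn.1], by linarith [htn3.2]⟩
        have hyn0 : ‖y tn‖ ≤ R := hYnorm _ htn
        have hyn1 : ‖y (tn + h)‖ ≤ R := hYnorm _ htn1
        have hyn2 : ‖y (tn + 2*h)‖ ≤ R := hYnorm _ htn2
        have hYp : ‖Y p‖ ≤ R + 1 := by
          have h7 : Y p = y tn - (y tn - Y p) := by abel
          calc ‖Y p‖ = ‖y tn - (y tn - Y p)‖ := by rw [← h7]
            _ ≤ ‖y tn‖ + ‖y tn - Y p‖ := norm_sub_le _ _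
            _ ≤ R + 1 := by linarith
        have nHa1 : ‖heunStep F h (y tn)‖ ≤ R + 1 := by
          have := hd1 (y tn) (by linarith); linarith
        have nHa2 : ‖heunStep F h (heunStep F h (y tn))‖ ≤ R + 2 := by
          have := hd1 (heunStep F h (y tn)) (by linarith); linarith
        have nHb1 : ‖heunStep F h (y (tn + h))‖ ≤ R + 1 := by
          have := hd1 (y (tn + h)) (by linarith); linarith
        have nHp1 : ‖heunStep F h (Y p)‖ ≤ R + 2 := by
          have := hd1 (Y p) (by linarith); linarith
        have nHp2 : ‖heunStep F h (heunStep F h (Y p))‖ ≤ R + 3 := by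
          have := hd1 (heunStep F h (Y p)) (by linarith); linarith
        -- truncation errors
        have hA1 : ‖y (tn + h) - heunStep F h (y tn)‖ ≤ Ac * h^3 :=
          hTrunc tn h htn htn1 hh0 hBh
        have hA2 : ‖y (tn + h + h) - heunStep F h (y (tn + h))‖ ≤ Ac * h^3 := by
          refine hTrunc (tn + h) h htn1 ?_ hh0 hBh
          rwa [show tn + h + h = tn + 2*h by ring]
        have hA3 : ‖y (tn + 2*h + h) - heunStep F h (y (tn + 2*h))‖ ≤ Ac * h^3 :=
          hTrunc (tn + 2*h) h htn2 htn3 hh0 hBh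
        -- Lipschitz transported errors
        have hB2 : ‖heunStep F h (y (tn + 2*h))
            - heunStep F h (heunStep F h (y (tn + h)))‖ ≤ q * (Ac * h^3) := by
          have hl := hHLip h (y (tn + 2*h)) (heunStep F h (y (tn + h))) hh0 hBh hM1h
            (by linarith) (by linarith)
          rw [← hqdef] at hl
          refine le_trans hl (mul_le_mul_of_nonneg_left ?_ (by linarith))
          rw [show tn + 2*h = tn + h + h by ring]
          exact hA2
        have hinner1 : ‖heunStep F h (y (tn + h))
            - heunStep F h (heunStep F h (y tn))‖ ≤ q * (Ac * h^3) := by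
          have hl := hHLip h (y (tn + h)) (heunStep F h (y tn)) hh0 hBh hM1h
            (by linarith) (by linarith)
          rw [← hqdef] at hl
          exact le_trans hl (mul_le_mul_of_nonneg_left hA1 (by linarith))
        have hB1 : ‖heunStep F h (heunStep F h (y (tn + h)))
            - heunStep F h (heunStep F h (heunStep F h (y tn)))‖ ≤ q * (q * (Ac * h^3)) := by
          have hl := hHLip h (heunStep F h (y (tn + h)))
            (heunStep F h (heunStep F h (y tn))) hh0 hBh hM1h
            (by linarith) (by linarith)
          rw [← hqdef] at hl
          exact le_trans hl (mul_le_mul_of_nonneg_left hinner1 (by linarith))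
        have hD0 : ‖heunStep F h (y tn) - heunStep F h (Y p)‖ ≤ q * ‖y tn - Y p‖ := by
          have hl := hHLip h (y tn) (Y p) hh0 hBh hM1h (by linarith) (by linarith)
          rw [← hqdef] at hl
          exact hl
        have hD1 : ‖heunStep F h (heunStep F h (y tn))
            - heunStep F h (heunStep F h (Y p))‖ ≤ q * (q * ‖y tn - Y p‖) := by
          have hl := hHLip h (heunStep F h (y tn)) (heunStep F h (Y p)) hh0 hBh hM1h
            (by linarith) (by linarith)
          rw [← hqdef] at hl
          exact le_trans hl (mul_le_mul_of_nonneg_left hD0 (by linarith))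
        have hD : ‖heunStep F h (heunStep F h (heunStep F h (y tn)))
            - heunStep F h (heunStep F h (heunStep F h (Y p)))‖
            ≤ q * (q * (q * ‖y tn - Y p‖)) := by
          have hl := hHLip h (heunStep F h (heunStep F h (y tn)))
            (heunStep F h (heunStep F h (Y p))) hh0 hBh hM1h
            (by linarith) (by linarith)
          rw [← hqdef] at hl
          exact le_trans hl (mul_le_mul_of_nonneg_left hD1 (by linarith))
        -- arithmetic
        have hP1 : (1:ℝ) ≤ q^(3*p) := by
          simpa using pow_le_pow_right₀ hq1 (Nat.zero_le (3*p))
        have hq3 : (1:ℝ) ≤ q^3 := by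
          simpa using pow_le_pow_right₀ hq1 (Nat.zero_le 3)
        have hexp : q ^ (3 * (p+1)) = q ^ (3*p) * q^3 := by
          have h8 : 3 * (p+1) = 3*p + 3 := by ring
          rw [h8, pow_add]
        have hAh3 : (0:ℝ) ≤ Ac * h^3 := mul_nonneg hAcpos.le (pow_nonneg hh0 3)
        have hc1 : Ac*h^3 + q*(Ac*h^3) + q*(q*(Ac*h^3)) ≤ Tk := by
          rw [hTkdef]
          have h7 : (0:ℝ) ≤ (2*q+1)*(q-1)*(Ac*h^3) :=
            mul_nonneg (mul_nonneg (by linarith only [hq1]) (by linarith only [hq1])) hAh3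
          linarith only [h7]
        have hc2 : q*(q*(q*‖y tn - Y p‖)) ≤ Tk * p * q^(3*p) * q^3 := by
          have h5 : q*(q*(q*‖y tn - Y p‖)) = q^3 * ‖y tn - Y p‖ := by ring
          rw [h5]
          have h6 : q^3 * ‖y tn - Y p‖ ≤ q^3 * (Tk * p * q^(3*p)) :=
            mul_le_mul_of_nonneg_left hem (by linarith only [hq3])
          linarith only [h6]
        have hc3 : Tk ≤ Tk * q^(3*p) * q^3 := by
          have h6 : (1:ℝ) ≤ q^(3*p) * q^3 := by
            calc (1:ℝ) = 1 * 1 := by ring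
              _ ≤ q^(3*p) * q^3 :=
                mul_le_mul hP1 hq3 (by norm_num) (by linarith only [hP1])
          calc Tk = Tk * 1 := by ring
            _ ≤ Tk * (q^(3*p) * q^3) := mul_le_mul_of_nonneg_left h6 hTknn
            _ = Tk * q^(3*p) * q^3 := by ring
        have harg2 : t₀ + ((p+1:ℕ):ℝ) * k = tn + 2*h + h := by
          rw [htndef, hhdef]; push_cast; ring
        rw [hYrec p (by omega), harg2, hexp]
        calc ‖y (tn + 2*h + h) - heunStep F h (heunStep F h (heunStep F h (Y p)))‖
            ≤ ‖y (tn + 2*h + h) - heunStep F h (y (tn + 2*h))‖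
              + ‖heunStep F h (y (tn + 2*h)) - heunStep F h (heunStep F h (y (tn + h)))‖
              + ‖heunStep F h (heunStep F h (y (tn + h)))
                  - heunStep F h (heunStep F h (heunStep F h (y tn)))‖
              + ‖heunStep F h (heunStep F h (heunStep F h (y tn)))
                  - heunStep F h (heunStep F h (heunStep F h (Y p)))‖ :=
            tri4 _ _ _ _ _
          _ ≤ Ac*h^3 + q*(Ac*h^3) + q*(q*(Ac*h^3)) + q*(q*(q*‖y tn - Y p‖)) := by
              linarith only [hA3, hB2, hB1, hD]
          _ ≤ Tk * (↑(p+1)) * (q^(3*p) * q^3) := by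
              push_cast
              linarith only [hc1, hc2, hc3]
    have hfin1 := hmain n hn
    have hfin2 := hchain n hn
    have hCC : Ca ≤ Ca + C₀ + 1 := by
      have h0 : (0:ℝ) ≤ (C₀:ℝ) := Nat.cast_nonneg _; linarith
    calc ‖y (t₀ + n * k) - Y n‖ ≤ Ca * k^2 := le_trans hfin1 hfin2
      _ ≤ (Ca + C₀ + 1) * k^2 := mul_le_mul_of_nonneg_right hCC (sq_nonneg k)
  · -- small M regime
    push_neg at hcase
    rw [hYiter n hn, hkdef]
    set g : ℝ := (Finset.range (M+1)).sup' Finset.nonempty_range_add_one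
      (fun i => ‖y (t₀ + i * ((T - t₀) / M)) - iter M i‖) with hgdef
    have hng : ‖y (t₀ + n * ((T - t₀) / M)) - iter M n‖ ≤ g := by
      rw [hgdef]
      exact Finset.le_sup' (fun i : ℕ => ‖y (t₀ + (i:ℝ) * ((T - t₀) / M)) - iter M i‖)
        (Finset.mem_range.mpr (Nat.lt_succ_of_le hn))
    have hgC : g * M^2 / (T - t₀)^2 ≤ (C₀ : ℝ) := by
      have h1 : (⌈g * M^2 / (T - t₀)^2⌉₊ : ℕ) ≤ C₀ := by
        rw [hC0def, hgdef]
        exact Finset.le_sup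
          (f := fun M : ℕ => ⌈((Finset.range (M+1)).sup' Finset.nonempty_range_add_one
            (fun i : ℕ => ‖y (t₀ + (i:ℝ) * ((T - t₀) / (M:ℝ))) - iter M i‖))
            * (M:ℝ)^2 / (T - t₀)^2⌉₊)
          (Finset.mem_range.mpr hcase)
      calc g * M^2 / (T - t₀)^2 ≤ (⌈g * M^2 / (T - t₀)^2⌉₊ : ℝ) := Nat.le_ceil _
        _ ≤ (C₀ : ℝ) := by exact_mod_cast h1
    have hTne : T - t₀ ≠ 0 := ne_of_gt (by linarith)
    have hMne : (M:ℝ) ≠ 0 := ne_of_gt hMR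
    have hge : g = (g * M^2 / (T - t₀)^2) * ((T - t₀) / M)^2 := by
      rw [div_pow]
      field_simp
    calc ‖y (t₀ + n * ((T - t₀) / M)) - iter M n‖ ≤ g := hng
      _ = (g * M^2 / (T - t₀)^2) * ((T - t₀) / M)^2 := hge
      _ ≤ (Ca + C₀ + 1) * ((T - t₀) / M)^2 := by
          have h2 : (0:ℝ) ≤ ((T - t₀) / M)^2 := sq_nonneg _
          have h3 : g * M^2 / (T - t₀)^2 ≤ Ca + C₀ + 1 := by linarith only [hgC, hCa1]
          exact mul_le_mul_of_nonneg_right h3 h2
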